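/- arXiv:1906.03904 — 2 statements merged into one kernel-verified Lean document; each statement's English description precedes it below -/
import Mathlib

section
/- Let A be a type, R and E binary relations on A, and S a binary relation with R ⊆ S ⊆ ERE. Suppose ERE is terminating. Then the following are equivalent: (i) S is confluent modulo E; (ii) S is locally confluent modulo E; (iii) both of the following hold: (a) for every u, a, b with S u a and R u b there exist w, w' with S* a w, S* b w' and w ≈_E w'; (b) for every u, a, v with S u a and (E u v or E v u) there exist w, w' with S* a w, S* v w' and w ≈_E w'. -/
/-!
Since `ERE` terminates, so does `S ⊆ ERE`, and confluence modulo `E` amounts to: all `S`-normal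
forms reachable from one `E`-class are `E`-equivalent. This is proved by well-founded induction
along `ERE⁺`, which absorbs `E` on both sides, so the induction hypothesis covers every class
reached by an `S`-step from the current class `C`. If `C` is not made of normal forms, it contains
the source `x` of an `R`-step `x → b`; fix a normal form `ν` of `b`. Condition (a) makes every
normal form reachable from `x` equivalent to `ν`, and condition (b) propagates this along the
`E`-steps inside `C`.
-/


/-- Reflexive-transitive closure of a relation. -/
def RStar {A : Type*} (T : A → A → Prop) : A → A → Prop :=
  Relation.ReflTransGen T

/-- The relation `ERE`: rewriting with `R` between representatives modulo `E`. -/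
def EREmod {A : Type*} (R E : A → A → Prop) (u v : A) : Prop :=
  ∃ u' v', Relation.EqvGen E u u' ∧ R u' v' ∧ Relation.EqvGen E v' v

/-- `S` is confluent modulo `E`. -/
def ConfluentModulo {A : Type*} (S E : A → A → Prop) : Prop :=
  ∀ u v u' v', Relation.EqvGen E u v → RStar S u u' → RStar S v v' →
    ∃ w w', RStar S u' w ∧ RStar S v' w' ∧ Relation.EqvGen E w w'

/-- `S` is locally confluent modulo `E`. -/
def LocallyConfluentModulo {A : Type*} (S E : A → A → Prop) : Prop :=
  (∀ u a b, S u a → S u b →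
    ∃ w w', RStar S a w ∧ RStar S b w' ∧ Relation.EqvGen E w w') ∧
  (∀ u a v, S u a → (E u v ∨ E v u) →
    ∃ w w', RStar S a w ∧ RStar S v w' ∧ Relation.EqvGen E w w')

open Relation Function

section

variable {A : Type*} {R E S : A → A → Prop}

theorem EREmod.of_eqvGen_left {t x y : A} (htx : EqvGen E t x) (hxy : EREmod R E x y) :
    EREmod R E t y := by
  obtain ⟨u, v, hxu, huv, hvy⟩ := hxy
  exact ⟨u, v, EqvGen.trans _ _ _ htx hxu, huv, hvy⟩

namespace RewritingModulo

def IsNormal (S : A → A → Prop) (x : A) : Prop := ∀ y, ¬ S x y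

def NormalFormsEqv (S E : A → A → Prop) (x ν : A) : Prop :=
  ∀ n, RStar S x n → IsNormal S n → EqvGen E n ν

def ClassHasUniqueNormalForm (S E : A → A → Prop) (t : A) : Prop :=
  ∃ ν, ∀ v, EqvGen E t v → NormalFormsEqv S E v ν

def UniqueNormalFormsBelow (S E : A → A → Prop) (t : A) : Prop :=
  ∀ x c, EqvGen E t x → S x c → ∀ s, RStar S c s → ClassHasUniqueNormalForm S E s

def JoinableModulo (S E : A → A → Prop) (a b : A) : Prop :=
  ∃ w w', RStar S a w ∧ RStar S b w' ∧ EqvGen E w w'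

theorem wellFounded_transGen_swap_of_not_exists_chain {r : A → A → Prop}
    (h : ¬ ∃ f : ℕ → A, ∀ n, r (f n) (f (n + 1))) : WellFounded (swap (TransGen r)) := by
  have hwf : WellFounded (swap r) :=
    wellFounded_iff_isEmpty_descending_chain.mpr ⟨fun ⟨f, hf⟩ => h ⟨f, hf⟩⟩
  convert hwf.transGen using 1
  ext a b
  exact transGen_swap.symm

theorem exists_rstar_isNormal (hS : WellFounded (swap S)) (x : A) :
    ∃ n, RStar S x n ∧ IsNormal S n := by
  induction x using hS.induction with
  | _ x ih =>
    by_cases hx : IsNormal S x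
    · exact ⟨x, ReflTransGen.refl, hx⟩
    · obtain ⟨y, hxy⟩ := not_forall_not.mp hx
      obtain ⟨n, hyn, hn⟩ := ih y hxy
      exact ⟨n, ReflTransGen.head hxy hyn, hn⟩

theorem IsNormal.eq_of_rstar {x y : A} (hx : IsNormal S x) (h : RStar S x y) : y = x := by
  rcases ReflTransGen.cases_head h with rfl | ⟨c, hxc, -⟩
  · rfl
  · exact absurd hxc (hx c)

namespace NormalFormsEqv

theorem of_isNormal {x : A} (hx : IsNormal S x) : NormalFormsEqv S E x x := by
  intro n hxn _
  rw [hx.eq_of_rstar hxn]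
  exact EqvGen.refl x

theorem eqv_of_isNormal {x ν : A} (h : NormalFormsEqv S E x ν) (hx : IsNormal S x) :
    EqvGen E x ν :=
  h x ReflTransGen.refl hx

theorem of_rstar {x y ν : A} (h : NormalFormsEqv S E x ν) (hxy : RStar S x y) :
    NormalFormsEqv S E y ν :=
  fun n hyn hn => h n (ReflTransGen.trans hxy hyn) hn

theorem trans_eqv {x μ ν : A} (h : NormalFormsEqv S E x μ) (hμν : EqvGen E μ ν) :
    NormalFormsEqv S E x ν :=
  fun n hxn hn => EqvGen.trans _ _ _ (h n hxn hn) hμν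

theorem eqv (hS : WellFounded (swap S)) {x μ ν : A} (hμ : NormalFormsEqv S E x μ)
    (hν : NormalFormsEqv S E x ν) : EqvGen E μ ν := by
  obtain ⟨n, hxn, hn⟩ := exists_rstar_isNormal hS x
  exact EqvGen.trans _ _ _ (EqvGen.symm _ _ (hμ n hxn hn)) (hν n hxn hn)

theorem of_forall_step {y ν : A} (hstep : ∀ b, S y b → NormalFormsEqv S E b ν)
    (hnormal : IsNormal S y → EqvGen E y ν) : NormalFormsEqv S E y ν := by
  intro n hyn hn
  rcases ReflTransGen.cases_head hyn with rfl | ⟨b, hyb, hbn⟩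
  · exact hnormal hn
  · exact hstep b hyb n hbn hn

end NormalFormsEqv

namespace ClassHasUniqueNormalForm

theorem normalFormsEqv_of_rstar (hS : WellFounded (swap S)) {a w ν : A}
    (hU : ClassHasUniqueNormalForm S E a) (haw : RStar S a w) (hw : NormalFormsEqv S E w ν) :
    NormalFormsEqv S E a ν := by
  obtain ⟨μ, hμ⟩ := hU
  have ha : NormalFormsEqv S E a μ := hμ a (EqvGen.refl a)
  exact ha.trans_eqv ((ha.of_rstar haw).eqv hS hw)

theorem normalFormsEqv_congr (hS : WellFounded (swap S)) {w w' ν : A}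
    (hU : ClassHasUniqueNormalForm S E w) (hww' : EqvGen E w w') :
    NormalFormsEqv S E w ν ↔ NormalFormsEqv S E w' ν := by
  obtain ⟨μ, hμ⟩ := hU
  have hw : NormalFormsEqv S E w μ := hμ w (EqvGen.refl w)
  have hw' : NormalFormsEqv S E w' μ := hμ w' hww'
  exact ⟨fun h => hw'.trans_eqv (hw.eqv hS h), fun h => hw.trans_eqv (hw'.eqv hS h)⟩

end ClassHasUniqueNormalForm

theorem normalFormsEqv_of_joinableModulo (hS : WellFounded (swap S)) {b c ν : A}
    (hU : ∀ s, RStar S c s → ClassHasUniqueNormalForm S E s) (hcb : JoinableModulo S E c b)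
    (hb : NormalFormsEqv S E b ν) : NormalFormsEqv S E c ν := by
  obtain ⟨w, w', hcw, hbw', hww'⟩ := hcb
  exact (hU c ReflTransGen.refl).normalFormsEqv_of_rstar hS hcw
    (((hU w hcw).normalFormsEqv_congr hS hww').mpr (hb.of_rstar hbw'))

theorem transGen_EREmod_of_step_of_rstar (hSE : ∀ u v, S u v → EREmod R E u v) {t x c s : A}
    (htx : EqvGen E t x) (hxc : S x c) (hcs : RStar S c s) : TransGen (EREmod R E) t s := by
  induction hcs with
  | refl => exact TransGen.single (EREmod.of_eqvGen_left htx (hSE x c hxc))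
  | tail _ hst ih => exact ih.tail (hSE _ _ hst)

theorem normalFormsEqv_of_symmGen {t : A} (hS : WellFounded (swap S))
    (hbelow : UniqueNormalFormsBelow S E t)
    (hcoh : ∀ u a v, S u a → SymmGen E u v → JoinableModulo S E a v)
    {x y ν : A} (htx : EqvGen E t x) (hxy : SymmGen E x y) (hx : NormalFormsEqv S E x ν) :
    NormalFormsEqv S E y ν := by
  have hxy' : EqvGen E x y := EqvGen.symmGen_le_eqvGen E x y hxy
  have hty : EqvGen E t y := EqvGen.trans _ _ _ htx hxy'
  refine NormalFormsEqv.of_forall_step (fun b hyb => ?_) (fun hy => ?_)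
  · exact normalFormsEqv_of_joinableModulo hS (hbelow y b hty hyb) (hcoh y b x hyb hxy.symm) hx
  · by_cases hxn : IsNormal S x
    · exact EqvGen.trans _ _ _ (EqvGen.symm _ _ hxy')
        (hx.eqv_of_isNormal hxn)
    · obtain ⟨a, hxa⟩ := not_forall_not.mp hxn
      obtain ⟨w, w', haw, hyw', hww'⟩ := hcoh x a y hxa hxy
      rw [hy.eq_of_rstar hyw'] at hww'
      have hw : NormalFormsEqv S E w ν := hx.of_rstar (ReflTransGen.head hxa haw)
      exact (((hbelow x a htx hxa w haw).normalFormsEqv_congr hS hww').mp hw).eqv_of_isNormal hy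

theorem normalFormsEqv_of_eqvGen {t : A} (hS : WellFounded (swap S))
    (hbelow : UniqueNormalFormsBelow S E t)
    (hcoh : ∀ u a v, S u a → SymmGen E u v → JoinableModulo S E a v)
    {x y ν : A} (htx : EqvGen E t x) (hxy : EqvGen E x y) (hx : NormalFormsEqv S E x ν) :
    NormalFormsEqv S E y ν := by
  rw [← EqvGen.reflTransGen_symmGen] at hxy
  induction hxy with
  | refl => exact hx
  | tail hxz hzy ih =>
    have htz : EqvGen E t _ :=
      EqvGen.trans _ _ _ htx (EqvGen.reflTransGen_symmGen E ▸ hxz)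
    exact normalFormsEqv_of_symmGen hS hbelow hcoh htz hzy ih

theorem exists_normalFormsEqv {t : A} (hS : WellFounded (swap S))
    (hRS : ∀ u v, R u v → S u v) (hSE : ∀ u v, S u v → EREmod R E u v)
    (hbelow : UniqueNormalFormsBelow S E t)
    (hcr : ∀ u a b, S u a → R u b → JoinableModulo S E a b)
    (hcoh : ∀ u a v, S u a → SymmGen E u v → JoinableModulo S E a v) :
    ∃ ν, NormalFormsEqv S E t ν := by
  by_cases ht : IsNormal S t
  · exact ⟨t, NormalFormsEqv.of_isNormal ht⟩
  obtain ⟨a, hta⟩ := not_forall_not.mp ht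
  obtain ⟨x, b, htx, hxb, -⟩ := hSE t a hta
  obtain ⟨ν, hbν, hν⟩ := exists_rstar_isNormal hS b
  have hb : NormalFormsEqv S E b ν :=
    (hbelow x b htx (hRS x b hxb) b ReflTransGen.refl).normalFormsEqv_of_rstar hS hbν
      (NormalFormsEqv.of_isNormal hν)
  have hx : NormalFormsEqv S E x ν := by
    refine NormalFormsEqv.of_forall_step (fun c hxc => ?_) (fun hx => absurd (hRS x b hxb) (hx b))
    exact normalFormsEqv_of_joinableModulo hS (hbelow x c htx hxc) (hcr x c b hxc hxb) hb
  exact ⟨ν, normalFormsEqv_of_eqvGen hS hbelow hcoh htx (EqvGen.symm _ _ htx) hx⟩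

theorem classHasUniqueNormalForm_of_forall_transGen (hS : WellFounded (swap S))
    (hRS : ∀ u v, R u v → S u v) (hSE : ∀ u v, S u v → EREmod R E u v)
    (hcr : ∀ u a b, S u a → R u b → JoinableModulo S E a b)
    (hcoh : ∀ u a v, S u a → SymmGen E u v → JoinableModulo S E a v)
    {t : A} (ih : ∀ s, TransGen (EREmod R E) t s → ClassHasUniqueNormalForm S E s) :
    ClassHasUniqueNormalForm S E t := by
  have hbelow : UniqueNormalFormsBelow S E t :=
    fun x c htx hxc s hcs => ih s (transGen_EREmod_of_step_of_rstar hSE htx hxc hcs)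
  obtain ⟨ν, hν⟩ := exists_normalFormsEqv hS hRS hSE hbelow hcr hcoh
  exact ⟨ν, fun v htv => normalFormsEqv_of_eqvGen hS hbelow hcoh (EqvGen.refl t) htv hν⟩

theorem confluentModulo_of_joinable_of_coherent (hRS : ∀ u v, R u v → S u v)
    (hSE : ∀ u v, S u v → EREmod R E u v)
    (hterm : ¬ ∃ f : ℕ → A, ∀ n, EREmod R E (f n) (f (n + 1)))
    (hcr : ∀ u a b, S u a → R u b → JoinableModulo S E a b)
    (hcoh : ∀ u a v, S u a → SymmGen E u v → JoinableModulo S E a v) :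
    ConfluentModulo S E := by
  have hlt : WellFounded (swap (TransGen (EREmod R E))) :=
    wellFounded_transGen_swap_of_not_exists_chain hterm
  have hS : WellFounded (swap S) := Subrelation.wf (fun h => TransGen.single (hSE _ _ h)) hlt
  have hU (t : A) : ClassHasUniqueNormalForm S E t :=
    hlt.induction t fun _ ih => classHasUniqueNormalForm_of_forall_transGen hS hRS hSE hcr hcoh ih
  intro u v u' v' huv huu' hvv'
  obtain ⟨ν, hν⟩ := hU u
  obtain ⟨n, hu'n, hn⟩ := exists_rstar_isNormal hS u'
  obtain ⟨m, hv'm, hm⟩ := exists_rstar_isNormal hS v'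
  exact ⟨n, m, hu'n, hv'm, EqvGen.trans _ _ _
    (hν u (EqvGen.refl u) n (ReflTransGen.trans huu' hu'n) hn)
    (EqvGen.symm _ _ (hν v huv m (ReflTransGen.trans hvv' hv'm) hm))⟩

end RewritingModulo

theorem ConfluentModulo.locallyConfluentModulo (h : ConfluentModulo S E) :
    LocallyConfluentModulo S E :=
  ⟨fun u a b hua hub =>
    h u u a b (EqvGen.refl u) (ReflTransGen.single hua) (ReflTransGen.single hub),
   fun u a v hua huv =>
    h u v a v (EqvGen.symmGen_le_eqvGen E u v huv) (ReflTransGen.single hua) ReflTransGen.refl⟩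

end

/-- For a rewriting system `S` modulo `E` with `R ⊆ S ⊆ ERE` and `ERE` terminating,
confluence modulo `E`, local confluence modulo `E`, and the conjunction of conditions
(a) and (b) on local branchings with `R` and with `E` are all equivalent. -/
theorem confluenceModulo_equivalences
    {A : Type*} (R E S : A → A → Prop)
    (hRS : ∀ u v, R u v → S u v)
    (hSE : ∀ u v, S u v → EREmod R E u v)
    (hterm : ¬ ∃ f : ℕ → A, ∀ n, EREmod R E (f n) (f (n + 1))) :
    (ConfluentModulo S E ↔ LocallyConfluentModulo S E) ∧
    (LocallyConfluentModulo S E ↔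
      ((∀ u a b, S u a → R u b →
        ∃ w w', RStar S a w ∧ RStar S b w' ∧ Relation.EqvGen E w w') ∧
       (∀ u a v, S u a → (E u v ∨ E v u) →
        ∃ w w', RStar S a w ∧ RStar S v w' ∧ Relation.EqvGen E w w'))) := by
  have ab_of_lc (h : LocallyConfluentModulo S E) :
      ∀ u a b, S u a → R u b → RewritingModulo.JoinableModulo S E a b :=
    fun u a b hua hub => h.1 u a b hua (hRS u b hub)
  have conf_of_ab := RewritingModulo.confluentModulo_of_joinable_of_coherent hRS hSE hterm
  exact ⟨⟨ConfluentModulo.locallyConfluentModulo, fun h => conf_of_ab (ab_of_lc h) h.2⟩,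
    ⟨fun h => ⟨ab_of_lc h, h.2⟩, fun h => (conf_of_ab h.1 h.2).locallyConfluentModulo⟩⟩
end

section
/- Let X be a type with a well-founded strict order < and let a, b, c, p, q, r, s be words over X. Assume: (a) |q ++ r| ≤_mult |a| + |q| and |a ++ p| ≤_mult |a| + |q|; (b) |p ++ s| ≤_mult |p| + |b| and |b ++ c| ≤_mult |p| + |b|. Then |q ++ r ++ s| ≤_mult |a ++ b| + |q| and |a ++ b ++ c| ≤_mult |a ++ b| + |q|. (Here a, b, c, p, q, r, s are the label words of the rewriting sequences f₁, f₂, h, f′₁, g₁, g′₁, g₂ in a pasting of two decreasing confluence diagrams modulo; hypotheses (a) and (b) express that the confluences of the branchings (f₁, e₁, g₁) and (f′₁, f₂) are decreasing.) -/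
open Classical in
/-- The lexicographic maximum measure of a word of labels: `|ε| = ∅` and
`|k·w| = {k} + |w'|`, where `w'` is obtained from `w` by deleting every letter
strictly smaller than `k`. -/
noncomputable def lmMeasure {X : Type*} [Preorder X] : List X → Multiset X
  | [] => 0
  | k :: w => {k} + lmMeasure (w.filter (fun x => decide (¬ x < k)))
termination_by w => w.length
decreasing_by
  simpa using Nat.lt_succ_of_le ((List.length_filter_le _ w.attach).trans_eq List.length_attach)

/-- The Dershowitz–Manna multiset extension of the strict order on `X`. -/
def DMLT {X : Type*} [Preorder X] (M N : Multiset X) : Prop :=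
  ∃ M₁ M₂ M₃ : Multiset X, M = M₁ + M₂ ∧ N = M₁ + M₃ ∧ M₃ ≠ 0 ∧
    ∀ x ∈ M₂, ∃ y ∈ M₃, x < y

/-- The reflexive closure of the Dershowitz–Manna multiset extension. -/
def DMLE {X : Type*} [Preorder X] (M N : Multiset X) : Prop :=
  M = N ∨ DMLT M N

/-!
Write `⌊v⌋_u` for `dropBelow u |v|`, the elements of `|v|` lying below no letter of `u`. Then
`|u v| = |u| + ⌊v⌋_u`, and `≤_mult` is stable under sums, cancellation and `dropBelow u`. The
second inequality is the chain `|a b c| = |a| + ⌊b c⌋_a ≤ |a| + ⌊p⌋_a + ⌊b⌋_a = |a p| + ⌊b⌋_a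
≤ |a| + |q| + ⌊b⌋_a`, by (b) and (a). For the first, split `⌊s⌋_{q r}` into the part lying below
no letter of `a p`, which (b) bounds by `⌊b⌋_a`, and the rest. Each element of the rest lies below
a letter of `a p`, hence by (a) below an element of `|a| + |q|`, while it lies below no element of
`|q r|`; such elements may be added to the smaller side of `|q r| ≤_mult |a| + |q|`.
-/

section Multiset

variable {X : Type*} [Preorder X] {M N P K L E A A' : Multiset X}

theorem dmlt_iff_isDershowitzMannaLT : DMLT M N ↔ M.IsDershowitzMannaLT N := by
  constructor
  · rintro ⟨A, B, C, hM, hN, hC, hBC⟩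
    exact ⟨A, B, C, hC, hM, hN, hBC⟩
  · rintro ⟨A, B, C, hC, hM, hN, hBC⟩
    exact ⟨A, B, C, hM, hN, hC, hBC⟩

theorem dmle_iff_exists_add :
    DMLE M N ↔ ∃ A B C, M = A + B ∧ N = A + C ∧ ∀ x ∈ B, ∃ y ∈ C, x < y := by
  constructor
  · rintro (rfl | ⟨A, B, C, hM, hN, -, hBC⟩)
    · exact ⟨M, 0, 0, by simp, by simp, by simp⟩
    · exact ⟨A, B, C, hM, hN, hBC⟩
  · rintro ⟨A, B, C, hM, hN, hBC⟩
    by_cases hC : C = 0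
    · have hB : B = 0 := Multiset.eq_zero_of_forall_notMem fun x hx => by
        simpa [hC] using hBC x hx
      exact .inl (by rw [hM, hN, hB, hC])
    · exact .inr ⟨A, B, C, hM, hN, hC, hBC⟩

theorem DMLE.trans (h₁ : DMLE M N) (h₂ : DMLE N P) : DMLE M P := by
  rcases h₁ with rfl | h₁
  · exact h₂
  rcases h₂ with rfl | h₂
  · exact .inr h₁
  rw [dmlt_iff_isDershowitzMannaLT] at h₁ h₂
  exact .inr (dmlt_iff_isDershowitzMannaLT.mpr (h₁.trans h₂))

theorem DMLE.of_le (h : M ≤ N) : DMLE M N := by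
  classical
  exact dmle_iff_exists_add.mpr ⟨M, 0, N - M, by simp, (add_tsub_cancel_of_le h).symm, by simp⟩

theorem DMLE.exists_le (h : DMLE M N) {x : X} (hx : x ∈ M) : ∃ y ∈ N, x ≤ y := by
  obtain ⟨A, B, C, rfl, rfl, hBC⟩ := dmle_iff_exists_add.mp h
  rcases Multiset.mem_add.mp hx with hxA | hxB
  · exact ⟨x, Multiset.mem_add.mpr (.inl hxA), le_rfl⟩
  · obtain ⟨y, hy, hxy⟩ := hBC x hxB
    exact ⟨y, Multiset.mem_add.mpr (.inr hy), hxy.le⟩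

theorem DMLE.filter (p : X → Prop) [DecidablePred p] (hp : ∀ ⦃x y⦄, x < y → p x → p y)
    (h : DMLE M N) : DMLE (M.filter p) (N.filter p) := by
  obtain ⟨A, B, C, rfl, rfl, hBC⟩ := dmle_iff_exists_add.mp h
  refine dmle_iff_exists_add.mpr
    ⟨A.filter p, B.filter p, C.filter p, Multiset.filter_add .., Multiset.filter_add .., ?_⟩
  intro x hx
  rw [Multiset.mem_filter] at hx
  obtain ⟨y, hy, hxy⟩ := hBC x hx.1
  exact ⟨y, Multiset.mem_filter.mpr ⟨hy, hp hxy hx.2⟩, hxy⟩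

/-- The Huet–Oppen characterization of the Dershowitz–Manna order. -/
def HuetOppenLE [DecidableEq X] (M N : Multiset X) : Prop :=
  ∀ x, N.count x < M.count x → ∃ y, x < y ∧ M.count y < N.count y

theorem HuetOppenLE.add_of_forall [DecidableEq X] (h : HuetOppenLE M N)
    (hE : ∀ x ∈ E, ∃ y, x < y ∧ M.count y < N.count y) : HuetOppenLE (M + E) N := by
  classical
  intro x hx
  rw [Multiset.count_add] at hx
  set S := N.toFinset.filter fun y => x < y ∧ M.count y < N.count y
  have mem_S : ∀ y, x < y → M.count y < N.count y → y ∈ S := fun y hxy hy =>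
    Finset.mem_filter.mpr ⟨Multiset.mem_toFinset.mpr (Multiset.count_pos.mp (by omega)), hxy, hy⟩
  have hS : S.Nonempty := by
    by_cases hxM : N.count x < M.count x
    · obtain ⟨y, hxy, hy⟩ := h x hxM
      exact ⟨y, mem_S y hxy hy⟩
    · obtain ⟨y, hxy, hy⟩ := hE x (Multiset.count_pos.mp (by omega))
      exact ⟨y, mem_S y hxy hy⟩
  -- a maximal witness `y` cannot lie in `E`, since `hE` would give a larger one
  obtain ⟨y, hyS, hmax⟩ := S.exists_maximal hS
  obtain ⟨-, hxy, hy⟩ := Finset.mem_filter.mp hyS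
  have hEy : E.count y = 0 := Multiset.count_eq_zero.mpr fun hyE => by
    obtain ⟨z, hyz, hz⟩ := hE y hyE
    exact hyz.not_ge (hmax (mem_S z (hxy.trans hyz) hz) hyz.le)
  exact ⟨y, hxy, by rw [Multiset.count_add, hEy, add_zero]; exact hy⟩

theorem dmle_iff_huetOppenLE [DecidableEq X] : DMLE M N ↔ HuetOppenLE M N := by
  constructor
  · intro h
    obtain ⟨A, B, C, rfl, rfl, hBC⟩ := dmle_iff_exists_add.mp h
    have hA : HuetOppenLE A (A + C) := fun x hx => by
      rw [Multiset.count_add] at hx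
      omega
    refine hA.add_of_forall fun x hx => ?_
    obtain ⟨y, hy, hxy⟩ := hBC x hx
    refine ⟨y, hxy, ?_⟩
    rw [Multiset.count_add]
    have := Multiset.count_pos.mpr hy
    omega
  · intro h
    refine dmle_iff_exists_add.mpr ⟨M ∩ N, M - N, N - M, ?_, ?_, fun x hx => ?_⟩
    · rw [add_comm, Multiset.sub_add_inter]
    · rw [Multiset.inter_comm, add_comm, Multiset.sub_add_inter]
    · rw [← Multiset.count_pos, Multiset.count_sub] at hx
      obtain ⟨y, hxy, hy⟩ := h x (by omega)
      refine ⟨y, ?_, hxy⟩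
      rw [← Multiset.count_pos, Multiset.count_sub]
      omega

theorem dmle_add_left_iff : DMLE (K + M) (K + N) ↔ DMLE M N := by
  classical
  simp only [dmle_iff_huetOppenLE, HuetOppenLE, Multiset.count_add, add_lt_add_iff_left]

theorem dmle_add_right_iff : DMLE (M + K) (N + K) ↔ DMLE M N := by
  rw [add_comm M, add_comm N, dmle_add_left_iff]

theorem DMLE.add {M' N' : Multiset X} (h : DMLE M N) (h' : DMLE M' N') :
    DMLE (M + M') (N + N') :=
  (dmle_add_right_iff.mpr h).trans (dmle_add_left_iff.mpr h')

theorem DMLE.add_add_of_forall (hA : DMLE A A') (hL : DMLE L K)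
    (hE : ∀ x ∈ E, (∃ v ∈ A', x < v) ∧ ∀ y ∈ A, ¬ x < y) : DMLE (A + L + E) (A' + K) := by
  classical
  refine dmle_iff_huetOppenLE.mpr <|
    (dmle_iff_huetOppenLE.mp (hA.add hL)).add_of_forall fun x hx => ?_
  obtain ⟨⟨v, hv, hxv⟩, hxA⟩ := hE x hx
  have hA0 : ∀ y, x < y → A.count y = 0 := fun y hxy =>
    Multiset.count_eq_zero.mpr fun hy => hxA y hy hxy
  simp only [Multiset.count_add]
  -- `v` itself is a witness unless `L` has too many copies of it, and then `L ≤ K` gives one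
  by_cases hLv : L.count v ≤ K.count v
  · have := Multiset.count_pos.mpr hv
    exact ⟨v, hxv, by rw [hA0 v hxv]; omega⟩
  · obtain ⟨y, hvy, hy⟩ := dmle_iff_huetOppenLE.mp hL v (not_le.mp hLv)
    exact ⟨y, hxv.trans hvy, by rw [hA0 y (hxv.trans hvy)]; omega⟩

end Multiset

section LmMeasure

open Classical

variable {X : Type*} [Preorder X]

noncomputable def dropBelow (u : List X) (M : Multiset X) : Multiset X :=
  M.filter fun x => ∀ y ∈ u, ¬ x < y

@[simp]
theorem mem_dropBelow {u : List X} {M : Multiset X} {x : X} :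
    x ∈ dropBelow u M ↔ x ∈ M ∧ ∀ y ∈ u, ¬ x < y :=
  Multiset.mem_filter

theorem dropBelow_add (u : List X) (M N : Multiset X) :
    dropBelow u (M + N) = dropBelow u M + dropBelow u N :=
  Multiset.filter_add ..

theorem dropBelow_le (u : List X) (M : Multiset X) : dropBelow u M ≤ M :=
  Multiset.filter_le ..

theorem dropBelow_dropBelow (u v : List X) (M : Multiset X) :
    dropBelow u (dropBelow v M) = dropBelow (u ++ v) M := by
  simp only [dropBelow, Multiset.filter_filter, List.forall_mem_append]

theorem dropBelow_add_filter_exists_lt (u : List X) (M : Multiset X) :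
    dropBelow u M + M.filter (fun x => ∃ y ∈ u, x < y) = M := by
  rw [dropBelow]
  convert Multiset.filter_add_not (fun x => ∀ y ∈ u, ¬ x < y) M using 3
  simp only [not_forall, not_not, exists_prop]

theorem DMLE.dropBelow (u : List X) {M N : Multiset X} (h : DMLE M N) :
    DMLE (dropBelow u M) (dropBelow u N) :=
  h.filter _ fun _ _ hxy hx y hy hyz => hx y hy (hxy.trans hyz)

theorem lmMeasure_induction {motive : List X → Prop} (nil : motive [])
    (cons : ∀ k w, motive (w.filter fun x => decide ¬ x < k) → motive (k :: w)) :
    ∀ w, motive w := by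
  intro w
  induction w using lmMeasure.induct with
  | case1 => exact nil
  | case2 k w ih =>
    rw [List.unattach_filter (g := fun x => decide ¬ x < k) (hf := fun _ _ => rfl),
      List.unattach_attach] at ih
    exact cons k w ih

@[simp]
theorem lmMeasure_nil : lmMeasure ([] : List X) = 0 := by
  rw [lmMeasure]

theorem lmMeasure_cons (k : X) (w : List X) :
    lmMeasure (k :: w) = {k} + lmMeasure (w.filter fun x => decide ¬ x < k) := by
  rw [lmMeasure]

theorem mem_of_mem_lmMeasure {w : List X} {x : X} : x ∈ lmMeasure w → x ∈ w := by
  induction w using lmMeasure_induction with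
  | nil => simp
  | cons k w ih =>
    rw [lmMeasure_cons, Multiset.mem_add, Multiset.mem_singleton]
    rintro (rfl | hx)
    · exact List.mem_cons_self
    · exact List.mem_cons_of_mem _ (List.mem_of_mem_filter (ih hx))

theorem exists_mem_lmMeasure_le {w : List X} {y : X} (hy : y ∈ w) :
    ∃ z ∈ lmMeasure w, y ≤ z := by
  induction w using lmMeasure_induction with
  | nil => simp at hy
  | cons k w ih =>
    simp only [lmMeasure_cons, Multiset.mem_add, Multiset.mem_singleton]
    by_cases hyk : y < k
    · exact ⟨k, .inl rfl, hyk.le⟩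
    rcases List.mem_cons.mp hy with rfl | hy
    · exact ⟨y, .inl rfl, le_rfl⟩
    obtain ⟨z, hz, hyz⟩ := ih (List.mem_filter.mpr ⟨hy, by simpa using hyk⟩)
    exact ⟨z, .inr hz, hyz⟩

theorem lmMeasure_filter {p : X → Bool} (hp : ∀ ⦃x y⦄, x < y → p x → p y) (w : List X) :
    lmMeasure (w.filter p) = (lmMeasure w).filter fun x => p x := by
  induction w using lmMeasure_induction with
  | nil => simp
  | cons k w ih =>
    have hswap : (w.filter p).filter (fun x => decide ¬ x < k) =
        (w.filter fun x => decide ¬ x < k).filter p := by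
      simp only [List.filter_filter, Bool.and_comm]
    by_cases hpk : p k
    · rw [List.filter_cons_of_pos hpk, lmMeasure_cons, lmMeasure_cons, hswap, ih,
        Multiset.filter_add, Multiset.filter_singleton, if_pos hpk]
    · have hfilter : w.filter p = (w.filter fun x => decide ¬ x < k).filter p := by
        rw [List.filter_filter]
        refine List.filter_congr fun x _ => ?_
        by_cases hpx : p x
        · simpa [hpx] using fun hxk => hpk (hp hxk hpx)
        · simp [hpx]
      rw [List.filter_cons_of_neg hpk, hfilter, ih, lmMeasure_cons, Multiset.filter_add,
        Multiset.filter_singleton, if_neg hpk, Multiset.empty_eq_zero, zero_add]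

theorem lmMeasure_append (u v : List X) :
    lmMeasure (u ++ v) = lmMeasure u + dropBelow u (lmMeasure v) := by
  induction u using lmMeasure_induction generalizing v with
  | nil => simp [dropBelow]
  | cons k u ih =>
    have hk : ∀ ⦃x y : X⦄, x < y → (decide ¬ x < k) = true → (decide ¬ y < k) = true := by
      simp only [decide_eq_true_eq]
      exact fun x y hxy hx hyk => hx (hxy.trans hyk)
    rw [List.cons_append, lmMeasure_cons, List.filter_append, ih, lmMeasure_filter hk v,
      lmMeasure_cons, add_assoc, dropBelow, dropBelow, Multiset.filter_filter]
    congr 2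
    refine Multiset.filter_congr fun x _ => ?_
    simp only [List.mem_filter, List.forall_mem_cons, decide_eq_true_eq]
    constructor
    · rintro ⟨hu, hxk⟩
      refine ⟨hxk, fun y hy hxy => ?_⟩
      by_cases hyk : y < k
      · exact hxk (hxy.trans hyk)
      · exact hu y ⟨hy, hyk⟩ hxy
    · exact fun ⟨hxk, hu⟩ => ⟨fun y hy => hu y hy.1, hxk⟩

theorem dropBelow_lmMeasure_append (w u v : List X) :
    dropBelow w (lmMeasure (u ++ v)) =
      dropBelow w (lmMeasure u) + dropBelow (w ++ u) (lmMeasure v) := by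
  rw [lmMeasure_append, dropBelow_add, dropBelow_dropBelow]

end LmMeasure

theorem pasting_property_two_general
    {X : Type*} [Preorder X]
    (a b c p q r s : List X)
    (ha1 : DMLE (lmMeasure (q ++ r)) (lmMeasure a + lmMeasure q))
    (ha2 : DMLE (lmMeasure (a ++ p)) (lmMeasure a + lmMeasure q))
    (hb1 : DMLE (lmMeasure (p ++ s)) (lmMeasure p + lmMeasure b))
    (hb2 : DMLE (lmMeasure (b ++ c)) (lmMeasure p + lmMeasure b)) :
    DMLE (lmMeasure (q ++ r ++ s)) (lmMeasure (a ++ b) + lmMeasure q) ∧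
    DMLE (lmMeasure (a ++ b ++ c)) (lmMeasure (a ++ b) + lmMeasure q) := by
  have hb_dropBelow : ∀ {u v : List X}, DMLE (lmMeasure (u ++ v)) (lmMeasure p + lmMeasure b) →
      DMLE (dropBelow a (lmMeasure u) + dropBelow (a ++ u) (lmMeasure v))
        (dropBelow a (lmMeasure p) + dropBelow a (lmMeasure b)) := fun h => by
    simpa only [dropBelow_lmMeasure_append, dropBelow_add] using h.dropBelow a
  rw [lmMeasure_append (q ++ r) s, lmMeasure_append (a ++ b) c, lmMeasure_append a b]
  constructor
  · classical
    rw [← dropBelow_add_filter_exists_lt (a ++ p) (dropBelow (q ++ r) (lmMeasure s)),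
      add_right_comm _ _ (lmMeasure q), ← add_assoc]
    refine ha1.add_add_of_forall ?_ fun x hx => ?_
    · exact (DMLE.of_le (Multiset.filter_le_filter _ (dropBelow_le _ _))).trans
        (dmle_add_left_iff.mp (hb_dropBelow hb1))
    · rw [Multiset.mem_filter, mem_dropBelow] at hx
      obtain ⟨⟨-, hxqr⟩, y, hy, hxy⟩ := hx
      obtain ⟨z, hz, hyz⟩ := exists_mem_lmMeasure_le hy
      obtain ⟨v, hv, hzv⟩ := ha2.exists_le hz
      exact ⟨⟨v, hv, hxy.trans_le (hyz.trans hzv)⟩,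
        fun y hy => hxqr y (mem_of_mem_lmMeasure hy)⟩
  · have hap := (dmle_add_right_iff (K := dropBelow a (lmMeasure b))).mpr ha2
    rw [lmMeasure_append, add_assoc, add_right_comm (lmMeasure a) (lmMeasure q)] at hap
    rw [add_assoc]
    exact (dmle_add_left_iff.mpr (hb_dropBelow hb2)).trans hap

/-- Pasting property for label words of two pasted decreasing confluence diagrams
modulo (Lemma 2.3.8): from the decreasingness inequalities (a) and (b), we get
`|q ++ r ++ s| ≤_mult |a ++ b| + |q|` and `|a ++ b ++ c| ≤_mult |a ++ b| + |q|`. -/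
theorem pasting_property_two
    {X : Type*} [Preorder X]
    (hwf : WellFounded ((· < ·) : X → X → Prop))
    (a b c p q r s : List X)
    (ha1 : DMLE (lmMeasure (q ++ r)) (lmMeasure a + lmMeasure q))
    (ha2 : DMLE (lmMeasure (a ++ p)) (lmMeasure a + lmMeasure q))
    (hb1 : DMLE (lmMeasure (p ++ s)) (lmMeasure p + lmMeasure b))
    (hb2 : DMLE (lmMeasure (b ++ c)) (lmMeasure p + lmMeasure b)) :
    DMLE (lmMeasure (q ++ r ++ s)) (lmMeasure (a ++ b) + lmMeasure q) ∧
    DMLE (lmMeasure (a ++ b ++ c)) (lmMeasure (a ++ b) + lmMeasure q) :=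
  pasting_property_two_general a b c p q r s ha1 ha2 hb1 hb2
end
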